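/- The germ at 0 ∈ ℝ⁹ of the distribution D spanned by Z₁ = x₃∂_t + x₂x₃∂_{x₁} + y₂x₃∂_{y₁} + ∂_{x₂} + y₃∂_{y₂} + (b+x₄)∂_{x₃} + (c+y₄)∂_{y₃}, Z₂ = ∂_{x₄}, Z₃ = ∂_{y₄} with (b,c) ≠ (0,0) is not locally diffeomorphic to its nilpotent approximation at 0, because the nilpotent approximation has big growth vector [3,5,7,8,9] at 0 while D has big growth vector [3,5,7,9] at 0. -/

import Mathlib

/-- ℝ⁹. For the distribution D the coordinates are t, x₁, y₁, x₂, y₂, x₃, y₃, x₄, y₄;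
for its nilpotent approximation they are the adapted coordinates z₁, …, z₉. -/
abbrev E9 := Fin 9 → ℝ

/-- Lie bracket of vector fields: `[X,Y](v) = DY(v)(X(v)) - DX(v)(Y(v))`. -/
noncomputable def lieB (X Y : E9 → E9) : E9 → E9 :=
  fun v => fderiv ℝ Y v (X v) - fderiv ℝ X v (Y v)

/-- Generating vector fields of the big flag of the distribution generated by a
set `G` of vector fields. -/
noncomputable def BigSet (G : Set (E9 → E9)) : ℕ → Set (E9 → E9)
  | 0 => G
  | k + 1 => BigSet G k ∪ {W | ∃ X ∈ BigSet G k, ∃ Y ∈ BigSet G k, W = lieB X Y}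

/-- The fiber at 0 of the `k`-th member of the big flag generated by `G`. -/
noncomputable def bigFiber (G : Set (E9 → E9)) (k : ℕ) : Submodule ℝ E9 :=
  Submodule.span ℝ ((fun W : E9 → E9 => W 0) '' BigSet G k)

/-- `Z₁ = x₃∂_t + x₂x₃∂_{x₁} + y₂x₃∂_{y₁} + ∂_{x₂} + y₃∂_{y₂} + (b+x₄)∂_{x₃} + (c+y₄)∂_{y₃}`. -/
noncomputable def Zone (b c : ℝ) : E9 → E9 := fun v =>
  ![v 5, v 3 * v 5, v 4 * v 5, 1, v 6, b + v 7, c + v 8, 0, 0]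

/-- The generators of D: Z₁, Z₂ = ∂_{x₄}, Z₃ = ∂_{y₄}. -/
noncomputable def gensD (b c : ℝ) : Set (E9 → E9) :=
  {Zone b c, fun _ => Pi.single 7 1, fun _ => Pi.single 8 1}

/-- First generator of the nilpotent approximation of D at 0, in adapted
coordinates z₁, …, z₉:
`Ẑ₁ = ∂₃ + z₁∂₄ + z₂∂₅ + z₄∂₆ + z₅∂₇ + z₃z₄∂₈ + (b z₃z₇ + (c/2) z₃²z₄)∂₉`. -/
noncomputable def Zhat1 (b c : ℝ) : E9 → E9 := fun v =>
  ![0, 0, 1, v 0, v 1, v 3, v 4, v 2 * v 3,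
    b * v 2 * v 6 + c / 2 * v 2 ^ 2 * v 3]

/-- The generators of the nilpotent approximation: Ẑ₁, Ẑ₂ = ∂₁, Ẑ₃ = ∂₂. -/
noncomputable def gensDhat (b c : ℝ) : Set (E9 → E9) :=
  {Zhat1 b c, fun _ => Pi.single 0 1, fun _ => Pi.single 1 1}

/-- The distribution (pointwise) spanned by a set of generators. -/
noncomputable def distOf (G : Set (E9 → E9)) : E9 → Submodule ℝ E9 :=
  fun v => Submodule.span ℝ ((fun W : E9 → E9 => W v) '' G)

/-- Local equivalence of distribution germs at 0: a local diffeomorphism fixing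
0 whose differential maps one distribution onto the other. -/
noncomputable def DistEquiv (D D' : E9 → Submodule ℝ E9) : Prop :=
  ∃ (Φ Ψ : E9 → E9) (U : Set E9), IsOpen U ∧ (0 : E9) ∈ U ∧ Φ 0 = 0 ∧
    ContDiffOn ℝ (⊤ : ℕ∞) Φ U ∧ ContDiffOn ℝ (⊤ : ℕ∞) Ψ (Φ '' U) ∧
    (∀ v ∈ U, Ψ (Φ v) = v) ∧
    ∀ v ∈ U, Submodule.map (fderiv ℝ Φ v).toLinearMap (D v) = D' (Φ v)


set_option linter.unusedVariables false
set_option linter.unusedTactic false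
set_option linter.unreachableTactic false
set_option linter.unnecessarySeqFocus false

noncomputable def pj (i : Fin 9) : E9 →L[ℝ] ℝ := ContinuousLinearMap.proj i

lemma hasFDerivAt_coord (i : Fin 9) (v : E9) : HasFDerivAt (fun x : E9 => x i) (pj i) v :=
  (pj i).hasFDerivAt

noncomputable def til (Φ A : E9 → E9) : E9 → E9 := fun v => fderiv ℝ Φ v (A v)

lemma diff_coord {F : E9 → E9} {v : E9} (hF : DifferentiableAt ℝ F v) (j : Fin 9) :
    DifferentiableAt ℝ (fun x => F x j) v :=
  (pj j).differentiableAt.comp v hF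

lemma fderiv_coord {F : E9 → E9} {v : E9} (hF : DifferentiableAt ℝ F v) (j : Fin 9) (u : E9) :
    fderiv ℝ (fun x => F x j) v u = (fderiv ℝ F v u) j := by
  have : HasFDerivAt (fun x => F x j) ((pj j).comp (fderiv ℝ F v)) v :=
    (pj j).hasFDerivAt.comp v hF.hasFDerivAt
  rw [this.fderiv]; rfl

lemma fderivPhi_diff {Φ : E9 → E9} {v : E9} (hΦ : ContDiffAt ℝ (⊤ : ℕ∞) Φ v) :
    DifferentiableAt ℝ (fderiv ℝ Φ) v :=
  (hΦ.fderiv_right (m := 1) (WithTop.coe_le_coe.mpr (le_top (a := ((1+1 : ℕ) : ℕ∞))))).differentiableAt one_ne_zero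

lemma til_diff {Φ A : E9 → E9} {v : E9} (hΦ : ContDiffAt ℝ (⊤ : ℕ∞) Φ v)
    (hA : DifferentiableAt ℝ A v) : DifferentiableAt ℝ (til Φ A) v :=
  (fderivPhi_diff hΦ).clm_apply hA

lemma til_lieB {Φ A B : E9 → E9} {v : E9} (hΦ : ContDiffAt ℝ (⊤ : ℕ∞) Φ v)
    (hA : DifferentiableAt ℝ A v) (hB : DifferentiableAt ℝ B v) :
    til Φ (lieB A B) v = fderiv ℝ (til Φ B) v (A v) - fderiv ℝ (til Φ A) v (B v) := by
  have hd := fderivPhi_diff hΦ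
  have e1 : fderiv ℝ (til Φ B) v =
      (fderiv ℝ Φ v).comp (fderiv ℝ B v) + (fderiv ℝ (fderiv ℝ Φ) v).flip (B v) :=
    fderiv_clm_apply hd hB
  have e2 : fderiv ℝ (til Φ A) v =
      (fderiv ℝ Φ v).comp (fderiv ℝ A v) + (fderiv ℝ (fderiv ℝ Φ) v).flip (A v) :=
    fderiv_clm_apply hd hA
  have hsym : IsSymmSndFDerivAt ℝ Φ v := hΦ.isSymmSndFDerivAt (by
    rw [minSmoothness_of_isRCLikeNormedField]; exact WithTop.coe_le_coe.mpr (le_top (a := ((2 : ℕ) : ℕ∞))))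
  have hs := hsym.eq (A v) (B v)
  simp only [til, lieB, e1, e2, ContinuousLinearMap.add_apply, ContinuousLinearMap.coe_comp',
    Function.comp_apply, ContinuousLinearMap.flip_apply, map_sub]
  rw [hs]
  abel

lemma fderiv_congr_on {U : Set E9} {v : E9} {f g : E9 → ℝ} (hU : IsOpen U) (hv : v ∈ U)
    (h : ∀ x ∈ U, f x = g x) : fderiv ℝ f v = fderiv ℝ g v :=
  Filter.EventuallyEq.fderiv_eq (Filter.eventuallyEq_of_mem (hU.mem_nhds hv) h)

lemma master_mul {U : Set E9} {v : E9} (hU : IsOpen U) (hv : v ∈ U)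
    {F G1 G2 : E9 → ℝ} {G1' G2' : E9 →L[ℝ] ℝ}
    (h1 : HasFDerivAt G1 G1' v) (h2 : HasFDerivAt G2 G2' v)
    (hcong : ∀ x ∈ U, F x = G1 x * G2 x) (u : E9) :
    fderiv ℝ F v u = G1 v * G2' u + G2 v * G1' u := by
  rw [fderiv_congr_on hU hv hcong, show (fun x => G1 x * G2 x) = G1 * G2 from rfl,
    (h1.mul h2).fderiv]
  simp [smul_eq_mul]

lemma master_add {U : Set E9} {v : E9} (hU : IsOpen U) (hv : v ∈ U)
    {F P Q : E9 → ℝ} {P' Q' : E9 →L[ℝ] ℝ}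
    (h1 : HasFDerivAt P P' v) (h2 : HasFDerivAt Q Q' v)
    (hcong : ∀ x ∈ U, F x = P x + Q x) (u : E9) :
    fderiv ℝ F v u = P' u + Q' u := by
  rw [fderiv_congr_on hU hv hcong, show (fun x => P x + Q x) = P + Q from rfl,
    (h1.add h2).fderiv]
  simp

lemma hasFDerivAt_sq {f : E9 → ℝ} {f' : E9 →L[ℝ] ℝ} {v : E9} (h : HasFDerivAt f f' v) :
    HasFDerivAt (fun x => f x ^ 2) (f v • f' + f v • f') v := by
  have h2 := h.mul h
  have e : (fun x => f x ^ 2) = fun y => f y * f y := funext fun x => pow_two _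
  rw [e]; exact h2

lemma lieB_eq_lieBracket (X Y : E9 → E9) : lieB X Y = VectorField.lieBracket ℝ X Y := rfl

lemma contDiff_lieB {X Y : E9 → E9} (hX : ContDiff ℝ (⊤ : ℕ∞) X) (hY : ContDiff ℝ (⊤ : ℕ∞) Y) :
    ContDiff ℝ (⊤ : ℕ∞) (lieB X Y) := by
  rw [lieB_eq_lieBracket]
  exact hX.lieBracket_vectorField hY (by simp)

section hpred

/-- level-0 condition: `dΦ(A)` is a section of span{Ẑ₁, ∂₀, ∂₁} along Φ. -/
def hpred0 (b c : ℝ) (Φ : E9 → E9) (U : Set E9) (A : E9 → E9) : Prop := ∀ v ∈ U,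
  til Φ A v 3 = til Φ A v 2 * Φ v 0 ∧
  til Φ A v 4 = til Φ A v 2 * Φ v 1 ∧
  til Φ A v 5 = til Φ A v 2 * Φ v 3 ∧
  til Φ A v 6 = til Φ A v 2 * Φ v 4 ∧
  til Φ A v 7 = til Φ A v 2 * (Φ v 2 * Φ v 3) ∧
  til Φ A v 8 = til Φ A v 2 * (b * Φ v 2 * Φ v 6 + c / 2 * Φ v 2 ^ 2 * Φ v 3)

def hpred1 (b c : ℝ) (Φ : E9 → E9) (U : Set E9) (A : E9 → E9) : Prop := ∀ v ∈ U,
  til Φ A v 5 = til Φ A v 2 * Φ v 3 ∧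
  til Φ A v 6 = til Φ A v 2 * Φ v 4 ∧
  til Φ A v 7 = til Φ A v 2 * (Φ v 2 * Φ v 3) ∧
  til Φ A v 8 = til Φ A v 2 * (b * Φ v 2 * Φ v 6 + c / 2 * Φ v 2 ^ 2 * Φ v 3)

def hpred2 (b c : ℝ) (Φ : E9 → E9) (U : Set E9) (A : E9 → E9) : Prop := ∀ v ∈ U,
  til Φ A v 7 = Φ v 2 * til Φ A v 5 ∧
  til Φ A v 8 = b * Φ v 2 * Φ v 6 * til Φ A v 2 + c / 2 * Φ v 2 ^ 2 * til Φ A v 5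

def hpred3 (b c : ℝ) (Φ : E9 → E9) (U : Set E9) (A : E9 → E9) : Prop := ∀ v ∈ U, Φ v 2 = 0 → til Φ A v 8 = 0

variable {b c : ℝ} {Φ : E9 → E9} {U : Set E9}

lemma hpred0_mono {A : E9 → E9} (h : hpred0 b c Φ U A) : hpred1 b c Φ U A :=
  fun v hv => ⟨(h v hv).2.2.1, (h v hv).2.2.2.1, (h v hv).2.2.2.2.1, (h v hv).2.2.2.2.2⟩

lemma hpred1_mono {A : E9 → E9} (h : hpred1 b c Φ U A) : hpred2 b c Φ U A := by
  intro v hv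
  obtain ⟨h5, h6, h7, h8⟩ := h v hv
  constructor
  · rw [h5, h7]; ring
  · rw [h5, h8]; ring

lemma hpred2_mono {A : E9 → E9} (h : hpred2 b c Φ U A) : hpred3 b c Φ U A := by
  intro v hv h2
  rw [(h v hv).2, h2]; ring

end hpred

section hsteps

variable {b c : ℝ} {Φ : E9 → E9} {U : Set E9}

lemma hstep01 (hU : IsOpen U) (hΦ : ∀ v ∈ U, ContDiffAt ℝ (⊤ : ℕ∞) Φ v)
    {A B : E9 → E9} (hA : ContDiff ℝ (⊤ : ℕ∞) A) (hB : ContDiff ℝ (⊤ : ℕ∞) B)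
    (h0A : hpred0 b c Φ U A) (h0B : hpred0 b c Φ U B) :
    hpred1 b c Φ U (lieB A B) := by
  intro v hv
  have hΦv := hΦ v hv
  have hAd : DifferentiableAt ℝ A v := (hA.differentiable (by simp)).differentiableAt
  have hBd : DifferentiableAt ℝ B v := (hB.differentiable (by simp)).differentiableAt
  have hTA := til_diff hΦv hAd
  have hTB := til_diff hΦv hBd
  have hG := til_lieB hΦv hAd hBd
  have Gc : ∀ j : Fin 9, til Φ (lieB A B) v j =
      fderiv ℝ (fun x => til Φ B x j) v (A v) - fderiv ℝ (fun x => til Φ A x j) v (B v) := by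
    intro j
    rw [fderiv_coord hTA j (B v), fderiv_coord hTB j (A v), hG]
    rfl
  have hc : ∀ i : Fin 9, HasFDerivAt (fun x => Φ x i) ((pj i).comp (fderiv ℝ Φ v)) v :=
    fun i => (pj i).hasFDerivAt.comp v (hΦv.differentiableAt (by simp)).hasFDerivAt
  have hA2 : DifferentiableAt ℝ (fun x => til Φ A x 2) v := diff_coord hTA 2
  have hB2 : DifferentiableAt ℝ (fun x => til Φ B x 2) v := diff_coord hTB 2
  have happ : ∀ (i : Fin 9) (u : E9), ((pj i).comp (fderiv ℝ Φ v)) u = fderiv ℝ Φ v u i :=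
    fun _ _ => rfl
  obtain ⟨a3, a4, a5, a6, a7, a8⟩ := h0A v hv
  obtain ⟨b3, b4, b5, b6, b7, b8⟩ := h0B v hv
  simp only [til] at a3 a4 a5 a6 a7 a8 b3 b4 b5 b6 b7 b8
  refine ⟨?_, ?_, ?_, ?_⟩
  · have eB := master_mul hU hv hB2.hasFDerivAt (hc 3) (fun x hx => (h0B x hx).2.2.1) (A v)
    have eA := master_mul hU hv hA2.hasFDerivAt (hc 3) (fun x hx => (h0A x hx).2.2.1) (B v)
    rw [Gc 5, Gc 2, eB, eA]
    simp only [happ, til]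
    rw [a3, b3]; ring
  · have eB := master_mul hU hv hB2.hasFDerivAt (hc 4) (fun x hx => (h0B x hx).2.2.2.1) (A v)
    have eA := master_mul hU hv hA2.hasFDerivAt (hc 4) (fun x hx => (h0A x hx).2.2.2.1) (B v)
    rw [Gc 6, Gc 2, eB, eA]
    simp only [happ, til]
    rw [a4, b4]; ring
  · have eB := master_mul hU hv hB2.hasFDerivAt ((hc 2).mul (hc 3))
      (fun x hx => (h0B x hx).2.2.2.2.1) (A v)
    have eA := master_mul hU hv hA2.hasFDerivAt ((hc 2).mul (hc 3))
      (fun x hx => (h0A x hx).2.2.2.2.1) (B v)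
    rw [Gc 7, Gc 2, eB, eA]
    simp only [happ, til, ContinuousLinearMap.add_apply, ContinuousLinearMap.smul_apply,
      smul_eq_mul, Pi.mul_apply, Pi.add_apply]
    rw [a3, b3]; ring
  · have hg8 := ((((hc 2).const_mul b).mul (hc 6)).add
      (((hasFDerivAt_sq (hc 2)).const_mul (c/2)).mul (hc 3)))
    have eB := master_mul hU hv hB2.hasFDerivAt hg8 (fun x hx => (h0B x hx).2.2.2.2.2) (A v)
    have eA := master_mul hU hv hA2.hasFDerivAt hg8 (fun x hx => (h0A x hx).2.2.2.2.2) (B v)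
    rw [Gc 8, Gc 2, eB, eA]
    simp only [happ, til, ContinuousLinearMap.add_apply, ContinuousLinearMap.smul_apply,
      smul_eq_mul, Pi.mul_apply, Pi.add_apply]
    rw [a3, b3, a6, b6]; ring

lemma hstep12 (hU : IsOpen U) (hΦ : ∀ v ∈ U, ContDiffAt ℝ (⊤ : ℕ∞) Φ v)
    {A B : E9 → E9} (hA : ContDiff ℝ (⊤ : ℕ∞) A) (hB : ContDiff ℝ (⊤ : ℕ∞) B)
    (h1A : hpred1 b c Φ U A) (h1B : hpred1 b c Φ U B) :
    hpred2 b c Φ U (lieB A B) := by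
  intro v hv
  have hΦv := hΦ v hv
  have hAd : DifferentiableAt ℝ A v := (hA.differentiable (by simp)).differentiableAt
  have hBd : DifferentiableAt ℝ B v := (hB.differentiable (by simp)).differentiableAt
  have hTA := til_diff hΦv hAd
  have hTB := til_diff hΦv hBd
  have hG := til_lieB hΦv hAd hBd
  have Gc : ∀ j : Fin 9, til Φ (lieB A B) v j =
      fderiv ℝ (fun x => til Φ B x j) v (A v) - fderiv ℝ (fun x => til Φ A x j) v (B v) := by
    intro j
    rw [fderiv_coord hTA j (B v), fderiv_coord hTB j (A v), hG]
    rfl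
  have hc : ∀ i : Fin 9, HasFDerivAt (fun x => Φ x i) ((pj i).comp (fderiv ℝ Φ v)) v :=
    fun i => (pj i).hasFDerivAt.comp v (hΦv.differentiableAt (by simp)).hasFDerivAt
  have hA2 : DifferentiableAt ℝ (fun x => til Φ A x 2) v := diff_coord hTA 2
  have hB2 : DifferentiableAt ℝ (fun x => til Φ B x 2) v := diff_coord hTB 2
  have happ : ∀ (i : Fin 9) (u : E9), ((pj i).comp (fderiv ℝ Φ v)) u = fderiv ℝ Φ v u i :=
    fun _ _ => rfl
  obtain ⟨a5, a6, a7, a8⟩ := h1A v hv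
  obtain ⟨b5, b6, b7, b8⟩ := h1B v hv
  simp only [til] at a5 a6 a7 a8 b5 b6 b7 b8
  have eB5 := master_mul hU hv hB2.hasFDerivAt (hc 3) (fun x hx => (h1B x hx).1) (A v)
  have eA5 := master_mul hU hv hA2.hasFDerivAt (hc 3) (fun x hx => (h1A x hx).1) (B v)
  refine ⟨?_, ?_⟩
  · have eB := master_mul hU hv hB2.hasFDerivAt ((hc 2).mul (hc 3))
      (fun x hx => (h1B x hx).2.2.1) (A v)
    have eA := master_mul hU hv hA2.hasFDerivAt ((hc 2).mul (hc 3))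
      (fun x hx => (h1A x hx).2.2.1) (B v)
    rw [Gc 7, Gc 5, eB, eA, eB5, eA5]
    simp only [happ, til, ContinuousLinearMap.add_apply, ContinuousLinearMap.smul_apply,
      smul_eq_mul, Pi.mul_apply, Pi.add_apply]
    ring
  · have hg8 := ((((hc 2).const_mul b).mul (hc 6)).add
      (((hasFDerivAt_sq (hc 2)).const_mul (c/2)).mul (hc 3)))
    have eB := master_mul hU hv hB2.hasFDerivAt hg8 (fun x hx => (h1B x hx).2.2.2) (A v)
    have eA := master_mul hU hv hA2.hasFDerivAt hg8 (fun x hx => (h1A x hx).2.2.2) (B v)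
    rw [Gc 8, Gc 2, Gc 5, eB, eA, eB5, eA5]
    simp only [happ, til, ContinuousLinearMap.add_apply, ContinuousLinearMap.smul_apply,
      smul_eq_mul, Pi.mul_apply, Pi.add_apply]
    rw [a6, b6]; ring

lemma hstep23 (hU : IsOpen U) (hΦ : ∀ v ∈ U, ContDiffAt ℝ (⊤ : ℕ∞) Φ v)
    {A B : E9 → E9} (hA : ContDiff ℝ (⊤ : ℕ∞) A) (hB : ContDiff ℝ (⊤ : ℕ∞) B)
    (h2A : hpred2 b c Φ U A) (h2B : hpred2 b c Φ U B) :
    hpred3 b c Φ U (lieB A B) := by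
  intro v hv hz
  have hΦv := hΦ v hv
  have hAd : DifferentiableAt ℝ A v := (hA.differentiable (by simp)).differentiableAt
  have hBd : DifferentiableAt ℝ B v := (hB.differentiable (by simp)).differentiableAt
  have hTA := til_diff hΦv hAd
  have hTB := til_diff hΦv hBd
  have hG := til_lieB hΦv hAd hBd
  have Gc : ∀ j : Fin 9, til Φ (lieB A B) v j =
      fderiv ℝ (fun x => til Φ B x j) v (A v) - fderiv ℝ (fun x => til Φ A x j) v (B v) := by
    intro j
    rw [fderiv_coord hTA j (B v), fderiv_coord hTB j (A v), hG]
    rfl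
  have hc : ∀ i : Fin 9, HasFDerivAt (fun x => Φ x i) ((pj i).comp (fderiv ℝ Φ v)) v :=
    fun i => (pj i).hasFDerivAt.comp v (hΦv.differentiableAt (by simp)).hasFDerivAt
  have hA2 : DifferentiableAt ℝ (fun x => til Φ A x 2) v := diff_coord hTA 2
  have hB2 : DifferentiableAt ℝ (fun x => til Φ B x 2) v := diff_coord hTB 2
  have hA5 : DifferentiableAt ℝ (fun x => til Φ A x 5) v := diff_coord hTA 5
  have hB5 : DifferentiableAt ℝ (fun x => til Φ B x 5) v := diff_coord hTB 5
  have happ : ∀ (i : Fin 9) (u : E9), ((pj i).comp (fderiv ℝ Φ v)) u = fderiv ℝ Φ v u i :=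
    fun _ _ => rfl
  have hPB := (((hc 2).const_mul b).mul (hc 6)).mul hB2.hasFDerivAt
  have hQB := ((hasFDerivAt_sq (hc 2)).const_mul (c/2)).mul hB5.hasFDerivAt
  have hPA := (((hc 2).const_mul b).mul (hc 6)).mul hA2.hasFDerivAt
  have hQA := ((hasFDerivAt_sq (hc 2)).const_mul (c/2)).mul hA5.hasFDerivAt
  have eB := master_add hU hv hPB hQB (fun x hx => (h2B x hx).2) (A v)
  have eA := master_add hU hv hPA hQA (fun x hx => (h2A x hx).2) (B v)
  rw [Gc 8, eB, eA]
  simp only [happ, til, ContinuousLinearMap.add_apply, ContinuousLinearMap.smul_apply,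
    smul_eq_mul, Pi.mul_apply, Pi.add_apply]
  rw [hz]
  ring

end hsteps

section dpred

variable {b c : ℝ}

def dpred0 (b c : ℝ) (X : E9 → E9) : Prop := ∀ v : E9,
  X v 0 = X v 3 * v 5 ∧
  X v 1 = X v 3 * (v 3 * v 5) ∧
  X v 2 = X v 3 * (v 4 * v 5) ∧
  X v 4 = X v 3 * v 6 ∧
  X v 5 = X v 3 * (b + v 7) ∧
  X v 6 = X v 3 * (c + v 8)

def dpred1 (X : E9 → E9) : Prop := ∀ v : E9,
  X v 0 = X v 3 * v 5 ∧
  X v 1 = X v 3 * (v 3 * v 5) ∧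
  X v 2 = X v 3 * (v 4 * v 5) ∧
  X v 4 = X v 3 * v 6

def dpred2 (X : E9 → E9) : Prop := ∀ v : E9,
  X v 1 = v 3 * X v 0 ∧ X v 2 = v 4 * X v 0

lemma dpred0_mono {X : E9 → E9} (h : dpred0 b c X) : dpred1 X :=
  fun v => ⟨(h v).1, (h v).2.1, (h v).2.2.1, (h v).2.2.2.1⟩

lemma dpred1_mono {X : E9 → E9} (h : dpred1 X) : dpred2 X := by
  intro v
  obtain ⟨h0, h1, h2, h4⟩ := h v
  exact ⟨by rw [h0, h1]; ring, by rw [h0, h2]; ring⟩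

lemma lieB_coord {A B : E9 → E9} {v : E9} (hAd : DifferentiableAt ℝ A v)
    (hBd : DifferentiableAt ℝ B v) (j : Fin 9) :
    lieB A B v j = fderiv ℝ (fun x => B x j) v (A v) - fderiv ℝ (fun x => A x j) v (B v) := by
  rw [fderiv_coord hAd j (B v), fderiv_coord hBd j (A v)]
  rfl

lemma dstep01 {A B : E9 → E9} (hA : ContDiff ℝ (⊤ : ℕ∞) A) (hB : ContDiff ℝ (⊤ : ℕ∞) B)
    (h0A : dpred0 b c A) (h0B : dpred0 b c B) : dpred1 (lieB A B) := by
  intro v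
  have hAd : DifferentiableAt ℝ A v := (hA.differentiable (by simp)).differentiableAt
  have hBd : DifferentiableAt ℝ B v := (hB.differentiable (by simp)).differentiableAt
  have hA3 : DifferentiableAt ℝ (fun x => A x 3) v := diff_coord hAd 3
  have hB3 : DifferentiableAt ℝ (fun x => B x 3) v := diff_coord hBd 3
  have Gc := lieB_coord hAd hBd
  have happ : ∀ (i : Fin 9) (u : E9), (pj i) u = u i := fun _ _ => rfl
  obtain ⟨a0, a1, a2, a4, a5, a6⟩ := h0A v
  obtain ⟨b0, b1, b2, b4, b5, b6⟩ := h0B v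
  refine ⟨?_, ?_, ?_, ?_⟩
  · have eB := master_mul isOpen_univ (Set.mem_univ v) hB3.hasFDerivAt (hasFDerivAt_coord 5 v)
      (fun x _ => (h0B x).1) (A v)
    have eA := master_mul isOpen_univ (Set.mem_univ v) hA3.hasFDerivAt (hasFDerivAt_coord 5 v)
      (fun x _ => (h0A x).1) (B v)
    rw [Gc 0, Gc 3, eB, eA]
    simp only [happ]
    rw [a5, b5]; ring
  · have eB := master_mul isOpen_univ (Set.mem_univ v) hB3.hasFDerivAt
      ((hasFDerivAt_coord 3 v).mul (hasFDerivAt_coord 5 v)) (fun x _ => (h0B x).2.1) (A v)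
    have eA := master_mul isOpen_univ (Set.mem_univ v) hA3.hasFDerivAt
      ((hasFDerivAt_coord 3 v).mul (hasFDerivAt_coord 5 v)) (fun x _ => (h0A x).2.1) (B v)
    rw [Gc 1, Gc 3, eB, eA]
    simp only [happ, ContinuousLinearMap.add_apply, ContinuousLinearMap.smul_apply, smul_eq_mul, Pi.mul_apply, Pi.add_apply]
    rw [a5, b5]; ring
  · have eB := master_mul isOpen_univ (Set.mem_univ v) hB3.hasFDerivAt
      ((hasFDerivAt_coord 4 v).mul (hasFDerivAt_coord 5 v)) (fun x _ => (h0B x).2.2.1) (A v)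
    have eA := master_mul isOpen_univ (Set.mem_univ v) hA3.hasFDerivAt
      ((hasFDerivAt_coord 4 v).mul (hasFDerivAt_coord 5 v)) (fun x _ => (h0A x).2.2.1) (B v)
    rw [Gc 2, Gc 3, eB, eA]
    simp only [happ, ContinuousLinearMap.add_apply, ContinuousLinearMap.smul_apply, smul_eq_mul, Pi.mul_apply, Pi.add_apply]
    rw [a4, b4, a5, b5]; ring
  · have eB := master_mul isOpen_univ (Set.mem_univ v) hB3.hasFDerivAt (hasFDerivAt_coord 6 v)
      (fun x _ => (h0B x).2.2.2.1) (A v)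
    have eA := master_mul isOpen_univ (Set.mem_univ v) hA3.hasFDerivAt (hasFDerivAt_coord 6 v)
      (fun x _ => (h0A x).2.2.2.1) (B v)
    rw [Gc 4, Gc 3, eB, eA]
    simp only [happ]
    rw [a6, b6]; ring

lemma dstep12 {A B : E9 → E9} (hA : ContDiff ℝ (⊤ : ℕ∞) A) (hB : ContDiff ℝ (⊤ : ℕ∞) B)
    (h1A : dpred1 A) (h1B : dpred1 B) : dpred2 (lieB A B) := by
  intro v
  have hAd : DifferentiableAt ℝ A v := (hA.differentiable (by simp)).differentiableAt
  have hBd : DifferentiableAt ℝ B v := (hB.differentiable (by simp)).differentiableAt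
  have hA3 : DifferentiableAt ℝ (fun x => A x 3) v := diff_coord hAd 3
  have hB3 : DifferentiableAt ℝ (fun x => B x 3) v := diff_coord hBd 3
  have Gc := lieB_coord hAd hBd
  have happ : ∀ (i : Fin 9) (u : E9), (pj i) u = u i := fun _ _ => rfl
  obtain ⟨a0, a1, a2, a4⟩ := h1A v
  obtain ⟨b0, b1, b2, b4⟩ := h1B v
  have eB0 := master_mul isOpen_univ (Set.mem_univ v) hB3.hasFDerivAt (hasFDerivAt_coord 5 v)
    (fun x _ => (h1B x).1) (A v)
  have eA0 := master_mul isOpen_univ (Set.mem_univ v) hA3.hasFDerivAt (hasFDerivAt_coord 5 v)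
    (fun x _ => (h1A x).1) (B v)
  refine ⟨?_, ?_⟩
  · have eB := master_mul isOpen_univ (Set.mem_univ v) hB3.hasFDerivAt
      ((hasFDerivAt_coord 3 v).mul (hasFDerivAt_coord 5 v)) (fun x _ => (h1B x).2.1) (A v)
    have eA := master_mul isOpen_univ (Set.mem_univ v) hA3.hasFDerivAt
      ((hasFDerivAt_coord 3 v).mul (hasFDerivAt_coord 5 v)) (fun x _ => (h1A x).2.1) (B v)
    rw [Gc 1, Gc 0, eB, eA, eB0, eA0]
    simp only [happ, ContinuousLinearMap.add_apply, ContinuousLinearMap.smul_apply, smul_eq_mul, Pi.mul_apply, Pi.add_apply]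
    ring
  · have eB := master_mul isOpen_univ (Set.mem_univ v) hB3.hasFDerivAt
      ((hasFDerivAt_coord 4 v).mul (hasFDerivAt_coord 5 v)) (fun x _ => (h1B x).2.2.1) (A v)
    have eA := master_mul isOpen_univ (Set.mem_univ v) hA3.hasFDerivAt
      ((hasFDerivAt_coord 4 v).mul (hasFDerivAt_coord 5 v)) (fun x _ => (h1A x).2.2.1) (B v)
    rw [Gc 2, Gc 0, eB, eA, eB0, eA0]
    simp only [happ, ContinuousLinearMap.add_apply, ContinuousLinearMap.smul_apply, smul_eq_mul, Pi.mul_apply, Pi.add_apply]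
    rw [a4, b4]; ring

end dpred

section fields

variable {α : Type*}

@[simp] lemma vec9_0 (x0 x1 x2 x3 x4 x5 x6 x7 x8 : α) : (![x0,x1,x2,x3,x4,x5,x6,x7,x8] : Fin 9 → α) 0 = x0 := rfl
@[simp] lemma vec9_1 (x0 x1 x2 x3 x4 x5 x6 x7 x8 : α) : (![x0,x1,x2,x3,x4,x5,x6,x7,x8] : Fin 9 → α) 1 = x1 := rfl
@[simp] lemma vec9_2 (x0 x1 x2 x3 x4 x5 x6 x7 x8 : α) : (![x0,x1,x2,x3,x4,x5,x6,x7,x8] : Fin 9 → α) 2 = x2 := rfl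
@[simp] lemma vec9_3 (x0 x1 x2 x3 x4 x5 x6 x7 x8 : α) : (![x0,x1,x2,x3,x4,x5,x6,x7,x8] : Fin 9 → α) 3 = x3 := rfl
@[simp] lemma vec9_4 (x0 x1 x2 x3 x4 x5 x6 x7 x8 : α) : (![x0,x1,x2,x3,x4,x5,x6,x7,x8] : Fin 9 → α) 4 = x4 := rfl
@[simp] lemma vec9_5 (x0 x1 x2 x3 x4 x5 x6 x7 x8 : α) : (![x0,x1,x2,x3,x4,x5,x6,x7,x8] : Fin 9 → α) 5 = x5 := rfl
@[simp] lemma vec9_6 (x0 x1 x2 x3 x4 x5 x6 x7 x8 : α) : (![x0,x1,x2,x3,x4,x5,x6,x7,x8] : Fin 9 → α) 6 = x6 := rfl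
@[simp] lemma vec9_7 (x0 x1 x2 x3 x4 x5 x6 x7 x8 : α) : (![x0,x1,x2,x3,x4,x5,x6,x7,x8] : Fin 9 → α) 7 = x7 := rfl
@[simp] lemma vec9_8 (x0 x1 x2 x3 x4 x5 x6 x7 x8 : α) : (![x0,x1,x2,x3,x4,x5,x6,x7,x8] : Fin 9 → α) 8 = x8 := rfl

variable (b c : ℝ)

/-- `A = ∂_t + x₂∂_{x₁} + y₂∂_{y₁}` -/
noncomputable def Af : E9 → E9 := fun v => ![1, v 3, v 4, 0, 0, 0, 0, 0, 0]

/-- `P = ∂₆ + z₃∂₈ + (c/2)z₃²∂₉` -/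
noncomputable def Pf (c : ℝ) : E9 → E9 := fun v => ![0,0,0,0,0,1,0, v 2, c / 2 * v 2 ^ 2]

noncomputable def Rf (c : ℝ) : E9 → E9 := fun v => ![0,0,0,0,0,0,0,-1, -(c * v 2)]

noncomputable def Nf (b : ℝ) : E9 → E9 := fun v => ![0,0,0,0,0,0,0,0, b * v 2]

lemma hasFDerivAt_Zone (v : E9) : HasFDerivAt (Zone b c)
    (ContinuousLinearMap.pi ![pj 5, v 3 • pj 5 + v 5 • pj 3, v 4 • pj 5 + v 5 • pj 4,
      0, pj 6, pj 7, pj 8, 0, 0]) v := by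
  apply hasFDerivAt_pi''
  intro i
  fin_cases i <;>
    simp only [Zone, ContinuousLinearMap.proj_pi, Fin.isValue, vec9_0, vec9_1, vec9_2, vec9_3,
      vec9_4, vec9_5, vec9_6, vec9_7, vec9_8]
  · exact hasFDerivAt_coord 5 v
  · exact (hasFDerivAt_coord 3 v).mul (hasFDerivAt_coord 5 v)
  · exact (hasFDerivAt_coord 4 v).mul (hasFDerivAt_coord 5 v)
  · exact hasFDerivAt_const 1 v
  · exact hasFDerivAt_coord 6 v
  · exact (hasFDerivAt_coord 7 v).const_add b
  · exact (hasFDerivAt_coord 8 v).const_add c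
  · exact hasFDerivAt_const 0 v
  · exact hasFDerivAt_const 0 v

lemma fderiv_Zone (v u : E9) : fderiv ℝ (Zone b c) v u =
    ![u 5, v 3 * u 5 + v 5 * u 3, v 4 * u 5 + v 5 * u 4, 0, u 6, u 7, u 8, 0, 0] := by
  rw [(hasFDerivAt_Zone b c v).fderiv]
  funext j
  fin_cases j <;> rfl

lemma hasFDerivAt_Zhat1 (v : E9) : HasFDerivAt (Zhat1 b c)
    (ContinuousLinearMap.pi ![0, 0, 0, pj 0, pj 1, pj 3, pj 4, v 2 • pj 3 + v 3 • pj 2,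
      ((b * v 2) • pj 6 + v 6 • (b • pj 2)) +
        ((c / 2 * v 2 ^ 2) • pj 3 + v 3 • ((c / 2) • (v 2 • pj 2 + v 2 • pj 2)))]) v := by
  apply hasFDerivAt_pi''
  intro i
  fin_cases i <;>
    simp only [Zhat1, ContinuousLinearMap.proj_pi, Fin.isValue, vec9_0, vec9_1, vec9_2, vec9_3,
      vec9_4, vec9_5, vec9_6, vec9_7, vec9_8]
  · exact hasFDerivAt_const 0 v
  · exact hasFDerivAt_const 0 v
  · exact hasFDerivAt_const 1 v
  · exact hasFDerivAt_coord 0 v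
  · exact hasFDerivAt_coord 1 v
  · exact hasFDerivAt_coord 3 v
  · exact hasFDerivAt_coord 4 v
  · exact (hasFDerivAt_coord 2 v).mul (hasFDerivAt_coord 3 v)
  · exact (((hasFDerivAt_coord 2 v).const_mul b).mul (hasFDerivAt_coord 6 v)).add
      (((hasFDerivAt_sq (hasFDerivAt_coord 2 v)).const_mul (c/2)).mul (hasFDerivAt_coord 3 v))

lemma fderiv_Zhat1 (v u : E9) : fderiv ℝ (Zhat1 b c) v u =
    ![0, 0, 0, u 0, u 1, u 3, u 4, v 2 * u 3 + v 3 * u 2,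
      b * v 2 * u 6 + b * v 6 * u 2 + c / 2 * v 2 ^ 2 * u 3 + c * v 2 * v 3 * u 2] := by
  rw [(hasFDerivAt_Zhat1 b c v).fderiv]
  funext j
  fin_cases j
  · rfl
  · rfl
  · rfl
  · rfl
  · rfl
  · rfl
  · rfl
  · rfl
  · show (b * v 2) * u 6 + v 6 * (b * u 2) +
        ((c / 2 * v 2 ^ 2) * u 3 + v 3 * ((c / 2) * (v 2 * u 2 + v 2 * u 2))) =
        b * v 2 * u 6 + b * v 6 * u 2 + c / 2 * v 2 ^ 2 * u 3 + c * v 2 * v 3 * u 2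
    ring

lemma hasFDerivAt_Af (v : E9) : HasFDerivAt Af
    (ContinuousLinearMap.pi ![0, pj 3, pj 4, 0, 0, 0, 0, 0, 0]) v := by
  apply hasFDerivAt_pi''
  intro i
  fin_cases i <;>
    simp only [Af, ContinuousLinearMap.proj_pi, Fin.isValue, vec9_0, vec9_1, vec9_2, vec9_3,
      vec9_4, vec9_5, vec9_6, vec9_7, vec9_8]
  · exact hasFDerivAt_const 1 v
  · exact hasFDerivAt_coord 3 v
  · exact hasFDerivAt_coord 4 v
  all_goals exact hasFDerivAt_const 0 v

lemma fderiv_Af (v u : E9) : fderiv ℝ Af v u = ![0, u 3, u 4, 0, 0, 0, 0, 0, 0] := by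
  rw [(hasFDerivAt_Af v).fderiv]
  funext j
  fin_cases j <;> rfl

lemma hasFDerivAt_Pf (v : E9) : HasFDerivAt (Pf c)
    (ContinuousLinearMap.pi ![0,0,0,0,0,0,0, pj 2, (c/2) • (v 2 • pj 2 + v 2 • pj 2)]) v := by
  apply hasFDerivAt_pi''
  intro i
  fin_cases i <;>
    simp only [Pf, ContinuousLinearMap.proj_pi, Fin.isValue, vec9_0, vec9_1, vec9_2, vec9_3,
      vec9_4, vec9_5, vec9_6, vec9_7, vec9_8]
  · exact hasFDerivAt_const 0 v
  · exact hasFDerivAt_const 0 v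
  · exact hasFDerivAt_const 0 v
  · exact hasFDerivAt_const 0 v
  · exact hasFDerivAt_const 0 v
  · exact hasFDerivAt_const 1 v
  · exact hasFDerivAt_const 0 v
  · exact hasFDerivAt_coord 2 v
  · exact (hasFDerivAt_sq (hasFDerivAt_coord 2 v)).const_mul (c/2)

lemma fderiv_Pf (v u : E9) : fderiv ℝ (Pf c) v u =
    ![0,0,0,0,0,0,0, u 2, c * v 2 * u 2] := by
  rw [(hasFDerivAt_Pf c v).fderiv]
  funext j
  fin_cases j
  · rfl
  · rfl
  · rfl
  · rfl
  · rfl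
  · rfl
  · rfl
  · rfl
  · show (c / 2) * (v 2 * u 2 + v 2 * u 2) = c * v 2 * u 2
    ring

lemma hasFDerivAt_Rf (v : E9) : HasFDerivAt (Rf c)
    (ContinuousLinearMap.pi ![0,0,0,0,0,0,0, 0, -(c • pj 2)]) v := by
  apply hasFDerivAt_pi''
  intro i
  fin_cases i <;>
    simp only [Rf, ContinuousLinearMap.proj_pi, Fin.isValue, vec9_0, vec9_1, vec9_2, vec9_3,
      vec9_4, vec9_5, vec9_6, vec9_7, vec9_8]
  · exact hasFDerivAt_const 0 v
  · exact hasFDerivAt_const 0 v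
  · exact hasFDerivAt_const 0 v
  · exact hasFDerivAt_const 0 v
  · exact hasFDerivAt_const 0 v
  · exact hasFDerivAt_const 0 v
  · exact hasFDerivAt_const 0 v
  · exact hasFDerivAt_const (-1) v
  · exact ((hasFDerivAt_coord 2 v).const_mul c).neg

lemma fderiv_Rf (v u : E9) : fderiv ℝ (Rf c) v u =
    ![0,0,0,0,0,0,0, 0, -(c * u 2)] := by
  rw [(hasFDerivAt_Rf c v).fderiv]
  funext j
  fin_cases j <;> rfl

lemma hasFDerivAt_Nf (v : E9) : HasFDerivAt (Nf b)
    (ContinuousLinearMap.pi ![0,0,0,0,0,0,0, 0, b • pj 2]) v := by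
  apply hasFDerivAt_pi''
  intro i
  fin_cases i <;>
    simp only [Nf, ContinuousLinearMap.proj_pi, Fin.isValue, vec9_0, vec9_1, vec9_2, vec9_3,
      vec9_4, vec9_5, vec9_6, vec9_7, vec9_8]
  · exact hasFDerivAt_const 0 v
  · exact hasFDerivAt_const 0 v
  · exact hasFDerivAt_const 0 v
  · exact hasFDerivAt_const 0 v
  · exact hasFDerivAt_const 0 v
  · exact hasFDerivAt_const 0 v
  · exact hasFDerivAt_const 0 v
  · exact hasFDerivAt_const 0 v
  · exact (hasFDerivAt_coord 2 v).const_mul b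

lemma fderiv_Nf (v u : E9) : fderiv ℝ (Nf b) v u =
    ![0,0,0,0,0,0,0, 0, b * u 2] := by
  rw [(hasFDerivAt_Nf b v).fderiv]
  funext j
  fin_cases j <;> rfl

end fields

section brackets

variable (b c : ℝ)

noncomputable def sg (i : Fin 9) : E9 := Pi.single i 1

lemma lieB_const_left (w : E9) (Y : E9 → E9) :
    lieB (fun _ => w) Y = fun v => fderiv ℝ Y v w := by
  funext v
  simp [lieB]

lemma brkD1 : lieB (fun _ => Pi.single 7 1) (Zone b c) = fun _ => Pi.single 5 1 := by
  rw [lieB_const_left]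
  funext v
  rw [fderiv_Zone]
  funext j
  fin_cases j <;> simp [Pi.single_apply]

lemma brkD2 : lieB (fun _ => Pi.single 8 1) (Zone b c) = fun _ => Pi.single 6 1 := by
  rw [lieB_const_left]
  funext v
  rw [fderiv_Zone]
  funext j
  fin_cases j <;> simp [Pi.single_apply]

lemma brkD3 : lieB (fun _ => Pi.single 5 1) (Zone b c) = Af := by
  rw [lieB_const_left]
  funext v
  rw [fderiv_Zone]
  funext j
  fin_cases j <;> simp [Af, Pi.single_apply]

lemma brkD4 : lieB (fun _ => Pi.single 6 1) (Zone b c) = fun _ => Pi.single 4 1 := by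
  rw [lieB_const_left]
  funext v
  rw [fderiv_Zone]
  funext j
  fin_cases j <;> simp [Pi.single_apply]

lemma valD5 : lieB Af (Zone b c) 0 = -Pi.single 1 1 := by
  show fderiv ℝ (Zone b c) 0 (Af 0) - fderiv ℝ Af 0 (Zone b c 0) = _
  rw [fderiv_Zone, fderiv_Af]
  funext j
  fin_cases j <;> simp [Af, Zone, Pi.single_apply]

lemma valD6 : lieB (fun _ => Pi.single 4 1) Af 0 = Pi.single 2 1 := by
  rw [lieB_const_left]
  show fderiv ℝ Af 0 (Pi.single 4 1) = _
  rw [fderiv_Af]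
  funext j
  fin_cases j <;> simp [Pi.single_apply]

lemma brkH1 : lieB (fun _ => Pi.single 0 1) (Zhat1 b c) = fun _ => Pi.single 3 1 := by
  rw [lieB_const_left]
  funext v
  rw [fderiv_Zhat1]
  funext j
  fin_cases j <;> simp [Pi.single_apply]

lemma brkH2 : lieB (fun _ => Pi.single 1 1) (Zhat1 b c) = fun _ => Pi.single 4 1 := by
  rw [lieB_const_left]
  funext v
  rw [fderiv_Zhat1]
  funext j
  fin_cases j <;> simp [Pi.single_apply]

lemma brkH3 : lieB (fun _ => Pi.single 3 1) (Zhat1 b c) = Pf c := by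
  rw [lieB_const_left]
  funext v
  rw [fderiv_Zhat1]
  funext j
  fin_cases j <;> simp [Pf, Pi.single_apply]

lemma brkH4 : lieB (fun _ => Pi.single 4 1) (Zhat1 b c) = fun _ => Pi.single 6 1 := by
  rw [lieB_const_left]
  funext v
  rw [fderiv_Zhat1]
  funext j
  fin_cases j <;> simp [Pi.single_apply]

lemma brkH5 : lieB (Pf c) (Zhat1 b c) = Rf c := by
  funext v
  show fderiv ℝ (Zhat1 b c) v (Pf c v) - fderiv ℝ (Pf c) v (Zhat1 b c v) = _
  rw [fderiv_Zhat1, fderiv_Pf]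
  funext j
  fin_cases j <;> simp [Pf, Zhat1, Rf]

lemma valH6 : lieB (Rf c) (Zhat1 b c) 0 = c • (Pi.single 8 1 : E9) := by
  show fderiv ℝ (Zhat1 b c) 0 (Rf c 0) - fderiv ℝ (Rf c) 0 (Zhat1 b c 0) = _
  rw [fderiv_Zhat1, fderiv_Rf]
  funext j
  fin_cases j <;> simp [Rf, Zhat1, Pi.single_apply]

lemma brkH7 : lieB (fun _ => Pi.single 6 1) (Zhat1 b c) = Nf b := by
  rw [lieB_const_left]
  funext v
  rw [fderiv_Zhat1]
  funext j
  fin_cases j <;> simp [Nf, Pi.single_apply]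

lemma valH8 : lieB (Nf b) (Zhat1 b c) 0 = (-b) • (Pi.single 8 1 : E9) := by
  show fderiv ℝ (Zhat1 b c) 0 (Nf b 0) - fderiv ℝ (Nf b) 0 (Zhat1 b c 0) = _
  rw [fderiv_Zhat1, fderiv_Nf]
  funext j
  fin_cases j <;> simp [Nf, Zhat1, Pi.single_apply]

lemma contDiff_Zone : ContDiff ℝ (⊤ : ℕ∞) (Zone b c) := by
  apply contDiff_pi.mpr
  intro i
  have hc : ∀ j : Fin 9, ContDiff ℝ (⊤ : ℕ∞) (fun x : E9 => x j) := fun j => (pj j).contDiff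
  fin_cases i <;>
    simp only [Zone, vec9_0, vec9_1, vec9_2, vec9_3, vec9_4, vec9_5, vec9_6, vec9_7, vec9_8]
  · exact hc 5
  · exact (hc 3).mul (hc 5)
  · exact (hc 4).mul (hc 5)
  · exact contDiff_const
  · exact hc 6
  · exact contDiff_const.add (hc 7)
  · exact contDiff_const.add (hc 8)
  · exact contDiff_const
  · exact contDiff_const

lemma contDiff_Zhat1 : ContDiff ℝ (⊤ : ℕ∞) (Zhat1 b c) := by
  apply contDiff_pi.mpr
  intro i
  have hc : ∀ j : Fin 9, ContDiff ℝ (⊤ : ℕ∞) (fun x : E9 => x j) := fun j => (pj j).contDiff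
  fin_cases i <;>
    simp only [Zhat1, vec9_0, vec9_1, vec9_2, vec9_3, vec9_4, vec9_5, vec9_6, vec9_7, vec9_8]
  · exact contDiff_const
  · exact contDiff_const
  · exact contDiff_const
  · exact hc 0
  · exact hc 1
  · exact hc 3
  · exact hc 4
  · exact (hc 2).mul (hc 3)
  · exact ((contDiff_const.mul (hc 2)).mul (hc 6)).add
      ((contDiff_const.mul ((hc 2).pow 2)).mul (hc 3))

end brackets

section spans

lemma li_pivot {d : ℕ} (fam : Fin d → E9) (p : Fin d → Fin 9)
    (h : ∀ i j, fam i (p j) = if i = j then 1 else 0) : LinearIndependent ℝ fam := by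
  apply LinearIndependent.of_comp (LinearMap.funLeft ℝ ℝ p)
  have e1 : (⇑(LinearMap.funLeft ℝ ℝ p) ∘ fam) = fun i => (Pi.single i 1 : Fin d → ℝ) := by
    funext i j
    simp [LinearMap.funLeft, h i j, Pi.single_apply, eq_comm]
  rw [e1]
  have e2 : (fun i => (Pi.single i 1 : Fin d → ℝ)) = ⇑(Pi.basisFun ℝ (Fin d)) := by
    funext i
    simp [Pi.basisFun_apply]
  rw [e2]
  exact (Pi.basisFun ℝ (Fin d)).linearIndependent

lemma li_sg {d : ℕ} (p : Fin d → Fin 9) (hp : Function.Injective p) :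
    LinearIndependent ℝ (fun i => sg (p i)) := by
  apply li_pivot _ p
  intro i j
  by_cases hij : i = j
  · subst hij; simp [sg]
  · have hne : p j ≠ p i := fun h => hij (hp h).symm
    simp [sg, Pi.single_apply, hij, hne]

lemma sum_sg (u : E9) : u = ∑ j : Fin 9, u j • sg j := by
  funext k
  rw [Finset.sum_apply]
  simp [sg, Pi.single_apply, mul_ite]

lemma mem_span_sg {d : ℕ} (p : Fin d → Fin 9) (u : E9)
    (h : ∀ j : Fin 9, (∀ i, p i ≠ j) → u j = 0) :
    u ∈ Submodule.span ℝ (Set.range (fun i => sg (p i))) := by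
  rw [sum_sg u]
  apply Submodule.sum_mem
  intro j _
  by_cases hj : ∃ i, p i = j
  · obtain ⟨i, rfl⟩ := hj
    exact Submodule.smul_mem _ _ (Submodule.subset_span ⟨i, rfl⟩)
  · push_neg at hj
    rw [h j hj]
    simp

lemma top_of_sg {M : Submodule ℝ E9} (h : ∀ i : Fin 9, sg i ∈ M) : M = ⊤ := by
  rw [eq_top_iff]
  intro u _
  rw [sum_sg u]
  exact Submodule.sum_mem _ fun j _ => Submodule.smul_mem _ _ (h j)

end spans

section chains

lemma BigSet_le_succ {G : Set (E9 → E9)} {k : ℕ} : BigSet G k ⊆ BigSet G (k + 1) :=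
  Set.subset_union_left

lemma mem_BigSet_brk {G : Set (E9 → E9)} {k : ℕ} {X Y : E9 → E9}
    (hX : X ∈ BigSet G k) (hY : Y ∈ BigSet G k) : lieB X Y ∈ BigSet G (k + 1) :=
  Or.inr ⟨X, hX, Y, hY, rfl⟩

lemma BigSet_smooth {G : Set (E9 → E9)} (hG : ∀ W ∈ G, ContDiff ℝ (⊤ : ℕ∞) W) :
    ∀ k, ∀ W ∈ BigSet G k, ContDiff ℝ (⊤ : ℕ∞) W := by
  intro k
  induction k with
  | zero => exact hG
  | succ k ih =>
    rintro W (hW | ⟨X, hX, Y, hY, rfl⟩)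
    · exact ih W hW
    · exact contDiff_lieB (ih X hX) (ih Y hY)

lemma bigFiber_mono {G : Set (E9 → E9)} {k : ℕ} : bigFiber G k ≤ bigFiber G (k + 1) :=
  Submodule.span_mono (Set.image_mono BigSet_le_succ)

variable {b c : ℝ} {Φ : E9 → E9} {U : Set E9}

lemma hchain1 (hU : IsOpen U) (hΦ : ∀ v ∈ U, ContDiffAt ℝ (⊤ : ℕ∞) Φ v) {G : Set (E9 → E9)}
    (hGsm : ∀ W ∈ G, ContDiff ℝ (⊤ : ℕ∞) W) (hbase : ∀ W ∈ G, hpred0 b c Φ U W) :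
    ∀ W ∈ BigSet G 1, hpred1 b c Φ U W := by
  have sm := BigSet_smooth hGsm
  rintro W (hW | ⟨X, hX, Y, hY, rfl⟩)
  · exact hpred0_mono (hbase W hW)
  · exact hstep01 hU hΦ (sm 0 X hX) (sm 0 Y hY) (hbase X hX) (hbase Y hY)

lemma hchain2 (hU : IsOpen U) (hΦ : ∀ v ∈ U, ContDiffAt ℝ (⊤ : ℕ∞) Φ v) {G : Set (E9 → E9)}
    (hGsm : ∀ W ∈ G, ContDiff ℝ (⊤ : ℕ∞) W) (hbase : ∀ W ∈ G, hpred0 b c Φ U W) :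
    ∀ W ∈ BigSet G 2, hpred2 b c Φ U W := by
  have sm := BigSet_smooth hGsm
  have P1 := hchain1 hU hΦ hGsm hbase
  rintro W (hW | ⟨X, hX, Y, hY, rfl⟩)
  · exact hpred1_mono (P1 W hW)
  · exact hstep12 hU hΦ (sm 1 X hX) (sm 1 Y hY) (P1 X hX) (P1 Y hY)

lemma hchain3 (hU : IsOpen U) (hΦ : ∀ v ∈ U, ContDiffAt ℝ (⊤ : ℕ∞) Φ v) {G : Set (E9 → E9)}
    (hGsm : ∀ W ∈ G, ContDiff ℝ (⊤ : ℕ∞) W) (hbase : ∀ W ∈ G, hpred0 b c Φ U W) :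
    ∀ W ∈ BigSet G 3, hpred3 b c Φ U W := by
  have sm := BigSet_smooth hGsm
  have P2 := hchain2 hU hΦ hGsm hbase
  rintro W (hW | ⟨X, hX, Y, hY, rfl⟩)
  · exact hpred2_mono (P2 W hW)
  · exact hstep23 hU hΦ (sm 2 X hX) (sm 2 Y hY) (P2 X hX) (P2 Y hY)

lemma gensD_smooth : ∀ W ∈ gensD b c, ContDiff ℝ (⊤ : ℕ∞) W := by
  rintro W (rfl | rfl | rfl)
  · exact contDiff_Zone b c
  · exact contDiff_const
  · exact contDiff_const

lemma gensDhat_smooth : ∀ W ∈ gensDhat b c, ContDiff ℝ (⊤ : ℕ∞) W := by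
  rintro W (rfl | rfl | rfl)
  · exact contDiff_Zhat1 b c
  · exact contDiff_const
  · exact contDiff_const

lemma dbase : ∀ W ∈ gensD b c, dpred0 b c W := by
  rintro W (rfl | rfl | rfl) <;> intro v
  · refine ⟨?_, ?_, ?_, ?_, ?_, ?_⟩ <;> simp [Zone]
  · refine ⟨?_, ?_, ?_, ?_, ?_, ?_⟩ <;> simp [Pi.single_apply]
  · refine ⟨?_, ?_, ?_, ?_, ?_, ?_⟩ <;> simp [Pi.single_apply]

lemma dchain1 : ∀ W ∈ BigSet (gensD b c) 1, dpred1 W := by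
  have sm := BigSet_smooth (gensD_smooth (b := b) (c := c))
  rintro W (hW | ⟨X, hX, Y, hY, rfl⟩)
  · exact dpred0_mono (dbase W hW)
  · exact dstep01 (sm 0 X hX) (sm 0 Y hY) (dbase X hX) (dbase Y hY)

lemma dchain2 : ∀ W ∈ BigSet (gensD b c) 2, dpred2 W := by
  have sm := BigSet_smooth (gensD_smooth (b := b) (c := c))
  rintro W (hW | ⟨X, hX, Y, hY, rfl⟩)
  · exact dpred1_mono (dchain1 W hW)
  · exact dstep12 (sm 1 X hX) (sm 1 Y hY) (dchain1 X hX) (dchain1 Y hY)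

lemma til_id (A : E9 → E9) : til (fun x : E9 => x) A = A := by
  funext v
  simp [til, fderiv_id']

lemma hatbase : ∀ W ∈ gensDhat b c, hpred0 b c (fun x : E9 => x) Set.univ W := by
  rintro W (rfl | rfl | rfl) <;> intro v _ <;> rw [til_id]
  · refine ⟨?_, ?_, ?_, ?_, ?_, ?_⟩ <;> simp [Zhat1]
  · refine ⟨?_, ?_, ?_, ?_, ?_, ?_⟩ <;> simp [Pi.single_apply]
  · refine ⟨?_, ?_, ?_, ?_, ?_, ?_⟩ <;> simp [Pi.single_apply]

lemma hΦ_id : ∀ v ∈ (Set.univ : Set E9), ContDiffAt ℝ (⊤ : ℕ∞) (fun x : E9 => x) v :=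
  fun _ _ => contDiff_id.contDiffAt

lemma hatU1 : ∀ W ∈ BigSet (gensDhat b c) 1,
    W 0 5 = 0 ∧ W 0 6 = 0 ∧ W 0 7 = 0 ∧ W 0 8 = 0 := by
  intro W hW
  have h := hchain1 isOpen_univ hΦ_id (gensDhat_smooth (b := b) (c := c)) hatbase W hW
    0 (Set.mem_univ 0)
  rw [til_id] at h
  simpa using h

lemma hatU2 : ∀ W ∈ BigSet (gensDhat b c) 2, W 0 7 = 0 ∧ W 0 8 = 0 := by
  intro W hW
  have h := hchain2 isOpen_univ hΦ_id (gensDhat_smooth (b := b) (c := c)) hatbase W hW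
    0 (Set.mem_univ 0)
  rw [til_id] at h
  simpa using h

lemma hatU3 : ∀ W ∈ BigSet (gensDhat b c) 3, W 0 8 = 0 := by
  intro W hW
  have h := hchain3 isOpen_univ hΦ_id (gensDhat_smooth (b := b) (c := c)) hatbase W hW
    0 (Set.mem_univ 0)
  rw [til_id] at h
  simpa using h

end chains

section fibers

variable (b c : ℝ)

lemma memD_Z0 : Zone b c 0 ∈ bigFiber (gensD b c) 0 :=
  Submodule.subset_span ⟨_, Or.inl rfl, rfl⟩

lemma memD7 : sg 7 ∈ bigFiber (gensD b c) 0 :=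
  Submodule.subset_span ⟨_, Or.inr (Or.inl rfl), rfl⟩

lemma memD8 : sg 8 ∈ bigFiber (gensD b c) 0 :=
  Submodule.subset_span ⟨_, Or.inr (Or.inr rfl), rfl⟩

lemma memD5 : sg 5 ∈ bigFiber (gensD b c) 1 :=
  Submodule.subset_span ⟨lieB (fun _ => Pi.single 7 1) (Zone b c),
    mem_BigSet_brk (Or.inr (Or.inl rfl)) (Or.inl rfl), by simp only [brkD1]; rfl⟩

lemma memD6 : sg 6 ∈ bigFiber (gensD b c) 1 :=
  Submodule.subset_span ⟨lieB (fun _ => Pi.single 8 1) (Zone b c),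
    mem_BigSet_brk (Or.inr (Or.inr rfl)) (Or.inl rfl), by simp only [brkD2]; rfl⟩

lemma memD3 : sg 3 ∈ bigFiber (gensD b c) 1 := by
  have h : sg 3 = Zone b c 0 - b • sg 5 - c • sg 6 := by
    funext j
    simp only [Pi.sub_apply, Pi.smul_apply, smul_eq_mul]
    fin_cases j <;> simp [Zone, sg, Pi.single_apply]
  rw [h]
  exact Submodule.sub_mem _
    (Submodule.sub_mem _ (bigFiber_mono (memD_Z0 b c)) (Submodule.smul_mem _ _ (memD5 b c)))
    (Submodule.smul_mem _ _ (memD6 b c))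

lemma memD0 : sg 0 ∈ bigFiber (gensD b c) 2 := by
  have hv : lieB (lieB (fun _ => Pi.single 7 1) (Zone b c)) (Zone b c) 0 = sg 0 := by
    simp only [brkD1, brkD3]
    funext j
    fin_cases j <;> simp [Af, sg, Pi.single_apply]
  exact hv ▸ Submodule.subset_span ⟨_,
    mem_BigSet_brk (mem_BigSet_brk (Or.inr (Or.inl rfl)) (Or.inl rfl))
      (BigSet_le_succ (Or.inl rfl)), rfl⟩

lemma memD4 : sg 4 ∈ bigFiber (gensD b c) 2 := by
  have hv : lieB (lieB (fun _ => Pi.single 8 1) (Zone b c)) (Zone b c) 0 = sg 4 := by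
    simp only [brkD2, brkD4]
    rfl
  exact hv ▸ Submodule.subset_span ⟨_,
    mem_BigSet_brk (mem_BigSet_brk (Or.inr (Or.inr rfl)) (Or.inl rfl))
      (BigSet_le_succ (Or.inl rfl)), rfl⟩

lemma memD1 : sg 1 ∈ bigFiber (gensD b c) 3 := by
  have hv : lieB (lieB (lieB (fun _ => Pi.single 7 1) (Zone b c)) (Zone b c)) (Zone b c) 0
      = -Pi.single 1 1 := by
    simp only [brkD1, brkD3]
    exact valD5 b c
  have hm : (-Pi.single 1 1 : E9) ∈ bigFiber (gensD b c) 3 :=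
    hv ▸ Submodule.subset_span ⟨_, mem_BigSet_brk
      (mem_BigSet_brk (mem_BigSet_brk (Or.inr (Or.inl rfl)) (Or.inl rfl))
        (BigSet_le_succ (Or.inl rfl)))
      (BigSet_le_succ (BigSet_le_succ (Or.inl rfl))), rfl⟩
  have h2 := Submodule.neg_mem _ hm
  simpa [sg] using h2

lemma memD2 : sg 2 ∈ bigFiber (gensD b c) 3 := by
  have hv : lieB (lieB (lieB (fun _ => Pi.single 8 1) (Zone b c)) (Zone b c))
      (lieB (lieB (fun _ => Pi.single 7 1) (Zone b c)) (Zone b c)) 0 = sg 2 := by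
    simp only [brkD1, brkD2, brkD3, brkD4]
    exact valD6
  exact hv ▸ Submodule.subset_span ⟨_,
    mem_BigSet_brk
      (mem_BigSet_brk (mem_BigSet_brk (Or.inr (Or.inr rfl)) (Or.inl rfl))
        (BigSet_le_succ (Or.inl rfl)))
      (mem_BigSet_brk (mem_BigSet_brk (Or.inr (Or.inl rfl)) (Or.inl rfl))
        (BigSet_le_succ (Or.inl rfl))), rfl⟩

lemma fiberD0 : bigFiber (gensD b c) 0 =
    Submodule.span ℝ (Set.range ![Zone b c 0, sg 7, sg 8]) := by
  apply le_antisymm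
  · apply Submodule.span_le.mpr
    rintro _ ⟨W, hW, rfl⟩
    rcases hW with rfl | rfl | rfl
    · exact Submodule.subset_span ⟨0, rfl⟩
    · exact Submodule.subset_span ⟨1, rfl⟩
    · exact Submodule.subset_span ⟨2, rfl⟩
  · apply Submodule.span_le.mpr
    rintro _ ⟨i, rfl⟩
    fin_cases i
    · exact memD_Z0 b c
    · exact memD7 b c
    · exact memD8 b c

lemma fiberD1 : bigFiber (gensD b c) 1 =
    Submodule.span ℝ (Set.range (fun i => sg (![3,5,6,7,8] i))) := by
  apply le_antisymm
  · apply Submodule.span_le.mpr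
    rintro _ ⟨W, hW, rfl⟩
    obtain ⟨e0, e1, e2, e4⟩ := dchain1 W hW 0
    simp only [Pi.zero_apply, mul_zero] at e0 e1 e2 e4
    apply mem_span_sg
    intro j hj
    fin_cases j
    · exact e0
    · exact e1
    · exact e2
    · exact absurd rfl (hj 0)
    · exact e4
    · exact absurd rfl (hj 1)
    · exact absurd rfl (hj 2)
    · exact absurd rfl (hj 3)
    · exact absurd rfl (hj 4)
  · apply Submodule.span_le.mpr
    rintro _ ⟨i, rfl⟩
    fin_cases i
    · exact memD3 b c
    · exact memD5 b c
    · exact memD6 b c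
    · exact bigFiber_mono (memD7 b c)
    · exact bigFiber_mono (memD8 b c)

lemma fiberD2 : bigFiber (gensD b c) 2 =
    Submodule.span ℝ (Set.range (fun i => sg (![0,3,4,5,6,7,8] i))) := by
  apply le_antisymm
  · apply Submodule.span_le.mpr
    rintro _ ⟨W, hW, rfl⟩
    obtain ⟨e1, e2⟩ := dchain2 W hW 0
    simp only [Pi.zero_apply, zero_mul] at e1 e2
    apply mem_span_sg
    intro j hj
    fin_cases j
    · exact absurd rfl (hj 0)
    · exact e1
    · exact e2
    · exact absurd rfl (hj 1)
    · exact absurd rfl (hj 2)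
    · exact absurd rfl (hj 3)
    · exact absurd rfl (hj 4)
    · exact absurd rfl (hj 5)
    · exact absurd rfl (hj 6)
  · apply Submodule.span_le.mpr
    rintro _ ⟨i, rfl⟩
    fin_cases i
    · exact memD0 b c
    · exact bigFiber_mono (memD3 b c)
    · exact memD4 b c
    · exact bigFiber_mono (memD5 b c)
    · exact bigFiber_mono (memD6 b c)
    · exact bigFiber_mono (bigFiber_mono (memD7 b c))
    · exact bigFiber_mono (bigFiber_mono (memD8 b c))

lemma fiberD3 : bigFiber (gensD b c) 3 = ⊤ := by
  apply top_of_sg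
  intro i
  fin_cases i
  · exact bigFiber_mono (memD0 b c)
  · exact memD1 b c
  · exact memD2 b c
  · exact bigFiber_mono (bigFiber_mono (memD3 b c))
  · exact bigFiber_mono (memD4 b c)
  · exact bigFiber_mono (bigFiber_mono (memD5 b c))
  · exact bigFiber_mono (bigFiber_mono (memD6 b c))
  · exact bigFiber_mono (bigFiber_mono (bigFiber_mono (memD7 b c)))
  · exact bigFiber_mono (bigFiber_mono (bigFiber_mono (memD8 b c)))

end fibers

section fibersHat

variable (b c : ℝ)

lemma ZhatZero : Zhat1 b c 0 = sg 2 := by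
  funext j
  fin_cases j <;> simp [Zhat1, sg, Pi.single_apply]

lemma memH2 : sg 2 ∈ bigFiber (gensDhat b c) 0 :=
  (ZhatZero b c) ▸ Submodule.subset_span ⟨_, Or.inl rfl, rfl⟩

lemma memH0 : sg 0 ∈ bigFiber (gensDhat b c) 0 :=
  Submodule.subset_span ⟨_, Or.inr (Or.inl rfl), rfl⟩

lemma memH1 : sg 1 ∈ bigFiber (gensDhat b c) 0 :=
  Submodule.subset_span ⟨_, Or.inr (Or.inr rfl), rfl⟩

lemma memH3 : sg 3 ∈ bigFiber (gensDhat b c) 1 :=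
  Submodule.subset_span ⟨lieB (fun _ => Pi.single 0 1) (Zhat1 b c),
    mem_BigSet_brk (Or.inr (Or.inl rfl)) (Or.inl rfl), by simp only [brkH1]; rfl⟩

lemma memH4 : sg 4 ∈ bigFiber (gensDhat b c) 1 :=
  Submodule.subset_span ⟨lieB (fun _ => Pi.single 1 1) (Zhat1 b c),
    mem_BigSet_brk (Or.inr (Or.inr rfl)) (Or.inl rfl), by simp only [brkH2]; rfl⟩

lemma memH5 : sg 5 ∈ bigFiber (gensDhat b c) 2 := by
  have hv : lieB (lieB (fun _ => Pi.single 0 1) (Zhat1 b c)) (Zhat1 b c) 0 = sg 5 := by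
    simp only [brkH1, brkH3]
    funext j
    fin_cases j <;> simp [Pf, sg, Pi.single_apply]
  exact hv ▸ Submodule.subset_span ⟨_,
    mem_BigSet_brk (mem_BigSet_brk (Or.inr (Or.inl rfl)) (Or.inl rfl))
      (BigSet_le_succ (Or.inl rfl)), rfl⟩

lemma memH6 : sg 6 ∈ bigFiber (gensDhat b c) 2 := by
  have hv : lieB (lieB (fun _ => Pi.single 1 1) (Zhat1 b c)) (Zhat1 b c) 0 = sg 6 := by
    simp only [brkH2, brkH4]
    rfl
  exact hv ▸ Submodule.subset_span ⟨_,
    mem_BigSet_brk (mem_BigSet_brk (Or.inr (Or.inr rfl)) (Or.inl rfl))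
      (BigSet_le_succ (Or.inl rfl)), rfl⟩

lemma memH7 : sg 7 ∈ bigFiber (gensDhat b c) 3 := by
  have hv : lieB (lieB (lieB (fun _ => Pi.single 0 1) (Zhat1 b c)) (Zhat1 b c)) (Zhat1 b c) 0
      = -Pi.single 7 1 := by
    simp only [brkH1, brkH3, brkH5]
    funext j
    fin_cases j <;> simp [Rf, Pi.single_apply]
  have hm : (-Pi.single 7 1 : E9) ∈ bigFiber (gensDhat b c) 3 :=
    hv ▸ Submodule.subset_span ⟨_, mem_BigSet_brk
      (mem_BigSet_brk (mem_BigSet_brk (Or.inr (Or.inl rfl)) (Or.inl rfl))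
        (BigSet_le_succ (Or.inl rfl)))
      (BigSet_le_succ (BigSet_le_succ (Or.inl rfl))), rfl⟩
  have h2 := Submodule.neg_mem _ hm
  simpa [sg] using h2

lemma memH8c : c • (Pi.single 8 1 : E9) ∈ bigFiber (gensDhat b c) 4 := by
  have hv : lieB (lieB (lieB (lieB (fun _ => Pi.single 0 1) (Zhat1 b c)) (Zhat1 b c))
      (Zhat1 b c)) (Zhat1 b c) 0 = c • (Pi.single 8 1 : E9) := by
    simp only [brkH1, brkH3, brkH5]
    exact valH6 b c
  exact hv ▸ Submodule.subset_span ⟨_, mem_BigSet_brk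
    (mem_BigSet_brk
      (mem_BigSet_brk (mem_BigSet_brk (Or.inr (Or.inl rfl)) (Or.inl rfl))
        (BigSet_le_succ (Or.inl rfl)))
      (BigSet_le_succ (BigSet_le_succ (Or.inl rfl))))
    (BigSet_le_succ (BigSet_le_succ (BigSet_le_succ (Or.inl rfl)))), rfl⟩

lemma memH8b : (-b) • (Pi.single 8 1 : E9) ∈ bigFiber (gensDhat b c) 4 := by
  have hv : lieB (lieB (lieB (lieB (fun _ => Pi.single 1 1) (Zhat1 b c)) (Zhat1 b c))
      (Zhat1 b c)) (Zhat1 b c) 0 = (-b) • (Pi.single 8 1 : E9) := by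
    simp only [brkH2, brkH4, brkH7]
    exact valH8 b c
  exact hv ▸ Submodule.subset_span ⟨_, mem_BigSet_brk
    (mem_BigSet_brk
      (mem_BigSet_brk (mem_BigSet_brk (Or.inr (Or.inr rfl)) (Or.inl rfl))
        (BigSet_le_succ (Or.inl rfl)))
      (BigSet_le_succ (BigSet_le_succ (Or.inl rfl))))
    (BigSet_le_succ (BigSet_le_succ (BigSet_le_succ (Or.inl rfl)))), rfl⟩

lemma fiberH0 : bigFiber (gensDhat b c) 0 =
    Submodule.span ℝ (Set.range (fun i => sg (![0,1,2] i))) := by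
  apply le_antisymm
  · apply Submodule.span_le.mpr
    rintro _ ⟨W, hW, rfl⟩
    rcases hW with rfl | rfl | rfl
    · exact Submodule.subset_span ⟨2, (ZhatZero b c).symm⟩
    · exact Submodule.subset_span ⟨0, rfl⟩
    · exact Submodule.subset_span ⟨1, rfl⟩
  · apply Submodule.span_le.mpr
    rintro _ ⟨i, rfl⟩
    fin_cases i
    · exact memH0 b c
    · exact memH1 b c
    · exact memH2 b c

lemma fiberH1 : bigFiber (gensDhat b c) 1 =
    Submodule.span ℝ (Set.range (fun i => sg (![0,1,2,3,4] i))) := by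
  apply le_antisymm
  · apply Submodule.span_le.mpr
    rintro _ ⟨W, hW, rfl⟩
    obtain ⟨e5, e6, e7, e8⟩ := hatU1 W hW
    apply mem_span_sg
    intro j hj
    fin_cases j
    · exact absurd rfl (hj 0)
    · exact absurd rfl (hj 1)
    · exact absurd rfl (hj 2)
    · exact absurd rfl (hj 3)
    · exact absurd rfl (hj 4)
    · exact e5
    · exact e6
    · exact e7
    · exact e8
  · apply Submodule.span_le.mpr
    rintro _ ⟨i, rfl⟩
    fin_cases i
    · exact bigFiber_mono (memH0 b c)
    · exact bigFiber_mono (memH1 b c)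
    · exact bigFiber_mono (memH2 b c)
    · exact memH3 b c
    · exact memH4 b c

lemma fiberH2 : bigFiber (gensDhat b c) 2 =
    Submodule.span ℝ (Set.range (fun i => sg (![0,1,2,3,4,5,6] i))) := by
  apply le_antisymm
  · apply Submodule.span_le.mpr
    rintro _ ⟨W, hW, rfl⟩
    obtain ⟨e7, e8⟩ := hatU2 W hW
    apply mem_span_sg
    intro j hj
    fin_cases j
    · exact absurd rfl (hj 0)
    · exact absurd rfl (hj 1)
    · exact absurd rfl (hj 2)
    · exact absurd rfl (hj 3)
    · exact absurd rfl (hj 4)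
    · exact absurd rfl (hj 5)
    · exact absurd rfl (hj 6)
    · exact e7
    · exact e8
  · apply Submodule.span_le.mpr
    rintro _ ⟨i, rfl⟩
    fin_cases i
    · exact bigFiber_mono (bigFiber_mono (memH0 b c))
    · exact bigFiber_mono (bigFiber_mono (memH1 b c))
    · exact bigFiber_mono (bigFiber_mono (memH2 b c))
    · exact bigFiber_mono (memH3 b c)
    · exact bigFiber_mono (memH4 b c)
    · exact memH5 b c
    · exact memH6 b c

lemma fiberH3 : bigFiber (gensDhat b c) 3 =
    Submodule.span ℝ (Set.range (fun i => sg (![0,1,2,3,4,5,6,7] i))) := by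
  apply le_antisymm
  · apply Submodule.span_le.mpr
    rintro _ ⟨W, hW, rfl⟩
    have e8 := hatU3 W hW
    apply mem_span_sg
    intro j hj
    fin_cases j
    · exact absurd rfl (hj 0)
    · exact absurd rfl (hj 1)
    · exact absurd rfl (hj 2)
    · exact absurd rfl (hj 3)
    · exact absurd rfl (hj 4)
    · exact absurd rfl (hj 5)
    · exact absurd rfl (hj 6)
    · exact absurd rfl (hj 7)
    · exact e8
  · apply Submodule.span_le.mpr
    rintro _ ⟨i, rfl⟩
    fin_cases i
    · exact bigFiber_mono (bigFiber_mono (bigFiber_mono (memH0 b c)))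
    · exact bigFiber_mono (bigFiber_mono (bigFiber_mono (memH1 b c)))
    · exact bigFiber_mono (bigFiber_mono (bigFiber_mono (memH2 b c)))
    · exact bigFiber_mono (bigFiber_mono (memH3 b c))
    · exact bigFiber_mono (bigFiber_mono (memH4 b c))
    · exact bigFiber_mono (memH5 b c)
    · exact bigFiber_mono (memH6 b c)
    · exact memH7 b c

lemma fiberH4 (hbc : (b, c) ≠ (0, 0)) : bigFiber (gensDhat b c) 4 = ⊤ := by
  have h8 : sg 8 ∈ bigFiber (gensDhat b c) 4 := by
    have hbc' : b ≠ 0 ∨ c ≠ 0 := by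
      by_contra h
      push_neg at h
      exact hbc (by rw [h.1, h.2])
    rcases hbc' with hb | hc
    · have h := Submodule.smul_mem _ (-b)⁻¹ (memH8b b c)
      rw [smul_smul, inv_mul_cancel₀ (neg_ne_zero.mpr hb), one_smul] at h
      exact h
    · have h := Submodule.smul_mem _ c⁻¹ (memH8c b c)
      rw [smul_smul, inv_mul_cancel₀ hc, one_smul] at h
      exact h
  apply top_of_sg
  intro i
  fin_cases i
  · exact bigFiber_mono (bigFiber_mono (bigFiber_mono (bigFiber_mono (memH0 b c))))
  · exact bigFiber_mono (bigFiber_mono (bigFiber_mono (bigFiber_mono (memH1 b c))))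
  · exact bigFiber_mono (bigFiber_mono (bigFiber_mono (bigFiber_mono (memH2 b c))))
  · exact bigFiber_mono (bigFiber_mono (bigFiber_mono (memH3 b c)))
  · exact bigFiber_mono (bigFiber_mono (bigFiber_mono (memH4 b c)))
  · exact bigFiber_mono (bigFiber_mono (memH5 b c))
  · exact bigFiber_mono (bigFiber_mono (memH6 b c))
  · exact bigFiber_mono (memH7 b c)
  · exact h8

end fibersHat

section ranks

variable (b c : ℝ)

lemma rank_span_sg {d : ℕ} (p : Fin d → Fin 9) (hp : Function.Injective p) :
    Module.finrank ℝ (Submodule.span ℝ (Set.range (fun i => sg (p i)))) = d := by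
  rw [finrank_span_eq_card (li_sg p hp)]
  simp

lemma rank_top9 : Module.finrank ℝ (⊤ : Submodule ℝ E9) = 9 := by
  rw [finrank_top]
  simp [Module.finrank_pi]

lemma rankD0 : Module.finrank ℝ (bigFiber (gensD b c) 0) = 3 := by
  rw [fiberD0]
  have hpiv : ∀ i j : Fin 3,
      (![Zone b c 0, sg 7, sg 8] : Fin 3 → E9) i ((![3,7,8] : Fin 3 → Fin 9) j) =
        if i = j then 1 else 0 := by
    intro i j
    fin_cases i <;> fin_cases j <;> simp [Zone, sg, Pi.single_apply] <;> try rfl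
  rw [finrank_span_eq_card (li_pivot _ ![3,7,8] hpiv)]
  simp

lemma rankD1 : Module.finrank ℝ (bigFiber (gensD b c) 1) = 5 := by
  rw [fiberD1, rank_span_sg _ (by decide)]

lemma rankD2 : Module.finrank ℝ (bigFiber (gensD b c) 2) = 7 := by
  rw [fiberD2, rank_span_sg _ (by decide)]

lemma rankD3 : Module.finrank ℝ (bigFiber (gensD b c) 3) = 9 := by
  rw [fiberD3, rank_top9]

lemma rankH0 : Module.finrank ℝ (bigFiber (gensDhat b c) 0) = 3 := by
  rw [fiberH0, rank_span_sg _ (by decide)]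

lemma rankH1 : Module.finrank ℝ (bigFiber (gensDhat b c) 1) = 5 := by
  rw [fiberH1, rank_span_sg _ (by decide)]

lemma rankH2 : Module.finrank ℝ (bigFiber (gensDhat b c) 2) = 7 := by
  rw [fiberH2, rank_span_sg _ (by decide)]

lemma rankH3 : Module.finrank ℝ (bigFiber (gensDhat b c) 3) = 8 := by
  rw [fiberH3, rank_span_sg _ (by decide)]

lemma rankH4 (hbc : (b, c) ≠ (0, 0)) :
    Module.finrank ℝ (bigFiber (gensDhat b c) 4) = 9 := by
  rw [fiberH4 b c hbc, rank_top9]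

end ranks

section final

variable {b c : ℝ}

lemma hbaseΦ {Φ : E9 → E9} {U : Set E9}
    (hmap : ∀ v ∈ U, Submodule.map (fderiv ℝ Φ v).toLinearMap (distOf (gensD b c) v) =
      distOf (gensDhat b c) (Φ v)) :
    ∀ W ∈ gensD b c, hpred0 b c Φ U W := by
  intro W hW v hv
  have hWv : W v ∈ distOf (gensD b c) v := Submodule.subset_span ⟨W, hW, rfl⟩
  have h2 : til Φ W v ∈ distOf (gensDhat b c) (Φ v) := by
    rw [← hmap v hv]
    exact Submodule.mem_map_of_mem hWv
  rw [distOf] at h2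
  have himg : (fun W0 : E9 → E9 => W0 (Φ v)) '' gensDhat b c =
      {Zhat1 b c (Φ v), Pi.single 0 1, Pi.single 1 1} := by
    simp [gensDhat, Set.image_insert_eq]
  rw [himg] at h2
  obtain ⟨a, z, hz, hu⟩ := Submodule.mem_span_insert.mp h2
  obtain ⟨p, q, hz'⟩ := Submodule.mem_span_pair.mp hz
  rw [hu, ← hz']
  refine ⟨?_, ?_, ?_, ?_, ?_, ?_⟩ <;>
    simp [Zhat1, Pi.single_apply, Pi.add_apply, Pi.smul_apply, smul_eq_mul] <;> ring

lemma notEquiv (hbc : (b, c) ≠ (0, 0)) :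
    ¬ DistEquiv (distOf (gensD b c)) (distOf (gensDhat b c)) := by
  rintro ⟨Φ, Ψ, U, hUopen, h0U, hΦ0, hΦsm, hΨsm, hΨΦ, hmap⟩
  have hΦat : ∀ v ∈ U, ContDiffAt ℝ (⊤ : ℕ∞) Φ v := fun v hv => hΦsm.contDiffAt (hUopen.mem_nhds hv)
  have h3 := hchain3 hUopen hΦat (gensD_smooth (b := b) (c := c)) (hbaseΦ hmap)
  set L : E9 →L[ℝ] E9 := fderiv ℝ Φ 0 with hLdef
  have h0img : (0 : E9) ∈ Φ '' U := ⟨0, h0U, hΦ0⟩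
  set g : E9 →L[ℝ] E9 := fderivWithin ℝ Ψ (Φ '' U) 0 with hgdef
  have hΨd : HasFDerivWithinAt Ψ g (Φ '' U) 0 :=
    ((hΨsm 0 h0img).differentiableWithinAt (by simp)).hasFDerivWithinAt
  have hΦd0 : HasFDerivAt Φ L 0 := ((hΦat 0 h0U).differentiableAt (by simp)).hasFDerivAt
  have hcomp : HasFDerivWithinAt (Ψ ∘ Φ) (g.comp L) U 0 := by
    apply HasFDerivWithinAt.comp (t := Φ '' U) 0 ?_ hΦd0.hasFDerivWithinAt
      (Set.mapsTo_image Φ U)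
    rw [hΦ0]
    exact hΨd
  have hid : HasFDerivAt (Ψ ∘ Φ) (g.comp L) 0 := hcomp.hasFDerivAt (hUopen.mem_nhds h0U)
  have heq : (Ψ ∘ Φ) =ᶠ[nhds (0 : E9)] id :=
    Filter.eventuallyEq_of_mem (hUopen.mem_nhds h0U) (fun x hx => hΨΦ x hx)
  have hid2 : HasFDerivAt (id : E9 → E9) (g.comp L) 0 := hid.congr_of_eventuallyEq heq.symm
  have hunique : g.comp L = ContinuousLinearMap.id ℝ E9 := hid2.unique (hasFDerivAt_id 0)
  have e : ∀ x : E9, g (L x) = x := by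
    intro x
    have h := congrArg (fun T : E9 →L[ℝ] E9 => T x) hunique
    simpa using h
  have hinj : Function.Injective L.toLinearMap := by
    intro u w huw
    rw [← e u, ← e w]
    exact congrArg g huw
  have hsurj : Function.Surjective L.toLinearMap :=
    (LinearMap.injective_iff_surjective).mp hinj
  have htop : Submodule.map L.toLinearMap (bigFiber (gensD b c) 3) = ⊤ := by
    rw [fiberD3, Submodule.map_top, LinearMap.range_eq_top.mpr hsurj]
  have hker : Submodule.map L.toLinearMap (bigFiber (gensD b c) 3) ≤
      LinearMap.ker (LinearMap.proj (R := ℝ) (φ := fun _ : Fin 9 => ℝ) 8) := by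
    rw [bigFiber, Submodule.map_span]
    apply Submodule.span_le.mpr
    rintro _ ⟨u, ⟨W, hW, rfl⟩, rfl⟩
    have hp := h3 W hW 0 h0U (show Φ 0 2 = 0 by rw [hΦ0]; rfl)
    exact hp
  have h8 : sg 8 ∈ LinearMap.ker (LinearMap.proj (R := ℝ) (φ := fun _ : Fin 9 => ℝ) 8) :=
    hker (htop ▸ Submodule.mem_top)
  rw [LinearMap.mem_ker] at h8
  simp [sg, LinearMap.proj_apply] at h8

end final

/-- For `(b,c) ≠ (0,0)` the germ at 0 of D is not equivalent to its nilpotent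
approximation: D has big growth vector [3,5,7,9] at 0 while the nilpotent
approximation has big growth vector [3,5,7,8,9] at 0. -/
theorem not_strongly_nilpotent_121 (b c : ℝ) (hbc : (b, c) ≠ (0, 0)) :
    (Module.finrank ℝ (bigFiber (gensD b c) 0) = 3 ∧
     Module.finrank ℝ (bigFiber (gensD b c) 1) = 5 ∧
     Module.finrank ℝ (bigFiber (gensD b c) 2) = 7 ∧
     Module.finrank ℝ (bigFiber (gensD b c) 3) = 9) ∧
    (Module.finrank ℝ (bigFiber (gensDhat b c) 0) = 3 ∧
     Module.finrank ℝ (bigFiber (gensDhat b c) 1) = 5 ∧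
     Module.finrank ℝ (bigFiber (gensDhat b c) 2) = 7 ∧
     Module.finrank ℝ (bigFiber (gensDhat b c) 3) = 8 ∧
     Module.finrank ℝ (bigFiber (gensDhat b c) 4) = 9) ∧
    ¬ DistEquiv (distOf (gensD b c)) (distOf (gensDhat b c)) := by
  exact ⟨⟨rankD0 b c, rankD1 b c, rankD2 b c, rankD3 b c⟩,
    ⟨rankH0 b c, rankH1 b c, rankH2 b c, rankH3 b c, rankH4 b c hbc⟩,
    notEquiv hbc⟩
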